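/- arXiv:2409.11614 — 5 statements merged into one kernel-verified Lean document; each statement's English description precedes it below -/
import Mathlib

section
/- Let G be a connected plane geometric graph (a graph on a finite set of vertices in ℝ², drawn with straight-line edges, no two of which cross) with at least two vertices, and let q be a point lying strictly outside the convex hull of the vertex set of G. Then q sees some edge of G, i.e., there is an edge (a,b) of G such that the open interior of the triangle with vertices q, a, b is disjoint from every vertex and every edge of G. -/
/-!
Separate `q` from the hull by a line with normal `n`, and describe a point `p` by its depth
(distance from `q` along `n`) and its slope, the tangent of the angle under which `q` sees `p`.
Edges collinear with `q` have degenerate triangles, so assume there are none. Then every edge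
spans an interval of slopes, over which its depth is a continuous function of the slope. The
slopes of the vertices cut the slope range into gaps; by connectivity every gap is spanned by an
edge, and since edges do not cross, one of them, the front of the gap, is nearest to `q` over
the whole gap. If two adjacent gaps have different fronts, the lower one ends or the upper one
starts at their common slope. Hence the front of the lowest gap at whose top its front ends is
the front of every gap it spans, and this edge is seen from `q`: a point of the graph inside its
triangle would lie on an edge nearer to `q` at that slope.
-/

open scoped Classical

noncomputable section

/-- Points in the Euclidean plane. -/
abbrev Pt : Type := EuclideanSpace ℝ (Fin 2)

/-- `S` is in general position: no three (distinct) points of `S` are collinear. -/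
def GenPos (S : Finset Pt) : Prop :=
  ∀ p ∈ S, ∀ q ∈ S, ∀ r ∈ S, p ≠ q → p ≠ r → q ≠ r →
    ¬ Collinear ℝ ({p, q, r} : Set Pt)

/-- The closed segments `[a,b]` and `[c,d]` cross: they share a point that is
interior to both segments. -/
def SegCross (a b c d : Pt) : Prop :=
  ∃ p : Pt, p ∈ openSegment ℝ a b ∧ p ∈ openSegment ℝ c d

/-- Two unordered edges (over vertices lying in the plane) cross. -/
def EdgeCross {S : Finset Pt} (e₁ e₂ : Sym2 ↥S) : Prop :=
  ∃ a b c d : ↥S, e₁ = s(a, b) ∧ e₂ = s(c, d) ∧ SegCross ↑a ↑b ↑c ↑d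

/-- A (straight-line drawn) graph is plane if no two of its edges cross. -/
def PlaneGraph {S : Finset Pt} (G : SimpleGraph ↥S) : Prop :=
  ∀ e₁ ∈ G.edgeSet, ∀ e₂ ∈ G.edgeSet, e₁ ≠ e₂ → ¬ EdgeCross e₁ e₂

/-- Every edge has one red (`true`) and one blue (`false`) endpoint. -/
def Bichromatic {S : Finset Pt} (col : Pt → Bool) (G : SimpleGraph ↥S) : Prop :=
  ∀ u v : ↥S, G.Adj u v → col ↑u ≠ col ↑v

/-- The Euclidean length of an unordered edge. -/
def edgeLen {S : Finset Pt} : Sym2 ↥S → ℝ :=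
  Sym2.lift ⟨fun a b => dist (a : Pt) (b : Pt), fun _ _ => dist_comm _ _⟩

/-- The total Euclidean length of the edges of a graph drawn with straight-line edges. -/
def graphLen {S : Finset Pt} (G : SimpleGraph ↥S) : ℝ :=
  ∑ᶠ e ∈ G.edgeSet, edgeLen e

/-- A bichromatic spanning tree of `S`. -/
def IsBST {S : Finset Pt} (col : Pt → Bool) (G : SimpleGraph ↥S) : Prop :=
  G.IsTree ∧ Bichromatic col G

/-- A minimum bichromatic spanning tree of `S`. -/
def IsMinBST {S : Finset Pt} (col : Pt → Bool) (G : SimpleGraph ↥S) : Prop :=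
  IsBST col G ∧ ∀ G' : SimpleGraph ↥S, IsBST col G' → graphLen G ≤ graphLen G'

open Set Topology

theorem pos_of_mem_interior_setOf_nonneg {E : Type*} [AddCommGroup E] [Module ℝ E]
    [TopologicalSpace E] [ContinuousAdd E] [ContinuousSMul ℝ E] {L : E → ℝ} {p w : E}
    {c : ℝ} (hp : p ∈ interior {z | 0 ≤ L z}) (hc : c < 0)
    (hL : ∀ t : ℝ, L (p + t • w) = L p + t * c) : 0 < L p := by
  have hcont : Continuous fun t : ℝ => p + t • w := by fun_prop
  have hev : ∀ᶠ t in 𝓝[>] (0 : ℝ), p + t • w ∈ {z | 0 ≤ L z} ∧ 0 < t := by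
    have hnhds : ∀ᶠ t in 𝓝 (0 : ℝ), p + t • w ∈ interior {z | 0 ≤ L z} :=
      hcont.tendsto' 0 p (by simp) |>.eventually (isOpen_interior.mem_nhds hp)
    exact (eventually_nhdsWithin_of_eventually_nhds hnhds).mono (fun t ht => interior_subset ht)
      |>.and self_mem_nhdsWithin
  obtain ⟨t, hLt, ht⟩ := hev.exists
  have : 0 ≤ L p + t * c := hL t ▸ hLt
  nlinarith

theorem convex_setOf_nonneg_of_affine {E : Type*} [AddCommGroup E] [Module ℝ E] {L : E → ℝ}
    (hL : ∀ a b : E, ∀ s t : ℝ, s + t = 1 → L (s • a + t • b) = s * L a + t * L b) :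
    Convex ℝ {z | 0 ≤ L z} := by
  intro a ha b hb s t hs ht hst
  simp only [Set.mem_ofPred_eq, hL a b s t hst] at *
  positivity

theorem convexHull_subset_setOf_nonneg {E : Type*} [AddCommGroup E] [Module ℝ E] {L : E → ℝ}
    (hL : ∀ a b : E, ∀ s t : ℝ, s + t = 1 → L (s • a + t • b) = s * L a + t * L b)
    {s : Set E} (hs : ∀ z ∈ s, 0 ≤ L z) : convexHull ℝ s ⊆ {z | 0 ≤ L z} :=
  convexHull_min hs (convex_setOf_nonneg_of_affine hL)

theorem pos_of_mem_interior_convexHull {E : Type*} [AddCommGroup E] [Module ℝ E]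
    [TopologicalSpace E] [ContinuousAdd E] [ContinuousSMul ℝ E] {L : E → ℝ}
    (hL : ∀ a b : E, ∀ s t : ℝ, s + t = 1 → L (s • a + t • b) = s * L a + t * L b)
    {s : Set E} (hs : ∀ z ∈ s, 0 ≤ L z) {p w : E} (hp : p ∈ interior (convexHull ℝ s))
    {c : ℝ} (hc : c < 0) (hLw : ∀ t : ℝ, L (p + t • w) = L p + t * c) : 0 < L p :=
  pos_of_mem_interior_setOf_nonneg (interior_mono (convexHull_subset_setOf_nonneg hL hs) hp) hc
    hLw

theorem nonneg_on_Icc_of_ne_zero {f : ℝ → ℝ} {a b m : ℝ} (hf : ContinuousOn f (Icc a b))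
    (hm : m ∈ Ioo a b) (hfm : 0 ≤ f m) (hf0 : ∀ t ∈ Ioo a b, f t ≠ 0) :
    ∀ t ∈ Icc a b, 0 ≤ f t := by
  have hIoo : ∀ t ∈ Ioo a b, 0 < f t := by
    intro t ht
    by_contra! hneg
    obtain ⟨u, hu, hu0⟩ := isPreconnected_Ioo.intermediate_value ht hm
      (hf.mono Ioo_subset_Icc_self) ⟨hneg, hfm⟩
    exact hf0 u hu hu0
  intro t ht
  have hcl : t ∈ closure (Ioo a b) := by rwa [closure_Ioo (hm.1.trans hm.2).ne]
  exact ContinuousWithinAt.closure_le hcl continuousWithinAt_const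
    ((hf t ht).mono Ioo_subset_Icc_self) fun u hu => (hIoo u hu).le

section Gaps

variable {α : Type*} [LinearOrder α] {V : Finset α} {a b v : α}

structure IsGap (V : Finset α) (a b : α) : Prop where
  left_mem : a ∈ V
  right_mem : b ∈ V
  lt : a < b
  le_or_le : ∀ v ∈ V, v ≤ a ∨ b ≤ v

theorem IsGap.le_left (h : IsGap V a b) (hv : v ∈ V) (hvb : v < b) : v ≤ a :=
  (h.le_or_le v hv).resolve_right hvb.not_ge

theorem IsGap.right_le (h : IsGap V a b) (hv : v ∈ V) (hav : a < v) : b ≤ v :=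
  (h.le_or_le v hv).resolve_left hav.not_ge

theorem IsGap.left_unique {a' : α} (h : IsGap V a b) (h' : IsGap V a' b) : a = a' :=
  le_antisymm (h'.le_left h.left_mem h.lt) (h.le_left h'.left_mem h'.lt)

theorem exists_isGap {l r s : α} (hl : l ∈ V) (hr : r ∈ V) (hlr : l < r) (hls : l ≤ s)
    (hsr : s ≤ r) : ∃ a b, IsGap V a b ∧ l ≤ a ∧ a ≤ s ∧ s ≤ b ∧ b ≤ r := by
  set A := V.filter (fun v => v < r ∧ v ≤ s)
  have hA : A.Nonempty := ⟨l, Finset.mem_filter.2 ⟨hl, hlr, hls⟩⟩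
  obtain ⟨haV, har, has⟩ := Finset.mem_filter.1 (A.max'_mem hA)
  set a := A.max' hA
  set B := V.filter (a < ·)
  have hB : B.Nonempty := ⟨r, Finset.mem_filter.2 ⟨hr, har⟩⟩
  obtain ⟨hbV, hab⟩ := Finset.mem_filter.1 (B.min'_mem hB)
  set b := B.min' hB
  have hsb : s ≤ b := by
    by_contra! hbs
    exact (A.le_max' b (Finset.mem_filter.2 ⟨hbV, hbs.trans_le hsr, hbs.le⟩)).not_gt hab
  refine ⟨a, b, ⟨haV, hbV, hab, fun v hv => ?_⟩,
    A.le_max' l (Finset.mem_filter.2 ⟨hl, hlr, hls⟩), has, hsb,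
    B.min'_le r (Finset.mem_filter.2 ⟨hr, har⟩)⟩
  rcases le_or_gt v a with hva | hav
  · exact Or.inl hva
  · exact Or.inr (B.min'_le v (Finset.mem_filter.2 ⟨hv, hav⟩))

end Gaps

theorem SimpleGraph.Walk.exists_adj_lt_le {V α : Type*} [LinearOrder α] {G : SimpleGraph V}
    (f : V → α) {s : α} {u v : V} (p : G.Walk u v) (hu : f u < s) (hv : s ≤ f v) :
    ∃ x y, G.Adj x y ∧ f x < s ∧ s ≤ f y := by
  induction p with
  | nil => exact absurd hv hu.not_ge
  | @cons u w v huw _ ih =>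
    rcases le_or_gt s (f w) with hw | hw
    · exact ⟨u, w, huw, hu, hw⟩
    · exact ih hw hv

structure View where
  q : Pt
  n0 : ℝ
  n1 : ℝ

namespace View

variable (V : View)

def depth (p : Pt) : ℝ := (p 0 - V.q 0) * V.n0 + (p 1 - V.q 1) * V.n1

def lateral (p : Pt) : ℝ := (p 1 - V.q 1) * V.n0 - (p 0 - V.q 0) * V.n1

-- `|n|²` times the orientation determinant of `q, z, w`
def cross (z w : Pt) : ℝ := V.depth z * V.lateral w - V.lateral z * V.depth w

def slope (p : Pt) : ℝ := V.lateral p / V.depth p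

def chordDen (x y : Pt) (s : ℝ) : ℝ :=
  (V.lateral y - s * V.depth y) + (s * V.depth x - V.lateral x)

-- The point of the line `xy` with slope `s`: its weights solve `lateral = s * depth`.
def chordPoint (x y : Pt) (s : ℝ) : Pt :=
  ((V.lateral y - s * V.depth y) / V.chordDen x y s) • x +
    ((s * V.depth x - V.lateral x) / V.chordDen x y s) • y

def chordDepth (x y : Pt) (s : ℝ) : ℝ := V.cross x y / V.chordDen x y s

variable {V}

section Affine

variable {a b p w : Pt} {s t : ℝ}

@[simp] theorem depth_q : V.depth V.q = 0 := by simp [depth]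

@[simp] theorem lateral_q : V.lateral V.q = 0 := by simp [lateral]

theorem depth_combo (h : s + t = 1) :
    V.depth (s • a + t • b) = s * V.depth a + t * V.depth b := by
  obtain rfl : t = 1 - s := by linarith
  simp only [depth, PiLp.add_apply, PiLp.smul_apply, smul_eq_mul]
  ring

theorem lateral_combo (h : s + t = 1) :
    V.lateral (s • a + t • b) = s * V.lateral a + t * V.lateral b := by
  obtain rfl : t = 1 - s := by linarith
  simp only [lateral, PiLp.add_apply, PiLp.smul_apply, smul_eq_mul]
  ring

theorem depth_add_smul_sub :
    V.depth (p + t • (a - b)) = V.depth p + t * (V.depth a - V.depth b) := by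
  simp only [depth, PiLp.add_apply, PiLp.smul_apply, PiLp.sub_apply, smul_eq_mul]
  ring

theorem lateral_add_smul_sub :
    V.lateral (p + t • (a - b)) = V.lateral p + t * (V.lateral a - V.lateral b) := by
  simp only [lateral, PiLp.add_apply, PiLp.smul_apply, PiLp.sub_apply, smul_eq_mul]
  ring

theorem cross_combo_left (h : s + t = 1) :
    V.cross (s • a + t • b) w = s * V.cross a w + t * V.cross b w := by
  simp only [cross, depth_combo h, lateral_combo h]
  ring

theorem cross_combo_right (h : s + t = 1) :
    V.cross w (s • a + t • b) = s * V.cross w a + t * V.cross w b := by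
  simp only [cross, depth_combo h, lateral_combo h]
  ring

theorem cross_add_smul_sub_left :
    V.cross (p + t • (a - b)) w = V.cross p w + t * (V.cross a w - V.cross b w) := by
  simp only [cross, depth_add_smul_sub, lateral_add_smul_sub]
  ring

theorem cross_add_smul_sub_right :
    V.cross w (p + t • (a - b)) = V.cross w p + t * (V.cross w a - V.cross w b) := by
  simp only [cross, depth_add_smul_sub, lateral_add_smul_sub]
  ring

@[simp] theorem cross_self : V.cross p p = 0 := by simp only [cross]; ring

@[simp] theorem cross_q_left : V.cross V.q p = 0 := by simp [cross]

@[simp] theorem cross_q_right : V.cross p V.q = 0 := by simp [cross]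

theorem cross_swap : V.cross w p = -V.cross p w := by simp only [cross]; ring

end Affine

section Slope

variable {p x y : Pt} {s : ℝ}

theorem lateral_eq_slope_mul (hp : V.depth p ≠ 0) : V.lateral p = V.slope p * V.depth p := by
  rw [slope, div_mul_cancel₀ _ hp]

theorem slope_le_slope_iff (hx : 0 < V.depth x) (hy : 0 < V.depth y) :
    V.slope x ≤ V.slope y ↔ 0 ≤ V.cross x y := by
  rw [slope, slope, div_le_div_iff₀ hx hy, cross]
  constructor <;> intro h <;> linarith

theorem slope_lt_slope_iff (hx : 0 < V.depth x) (hy : 0 < V.depth y) :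
    V.slope x < V.slope y ↔ 0 < V.cross x y := by
  rw [slope, slope, div_lt_div_iff₀ hx hy, cross]
  constructor <;> intro h <;> linarith

theorem eq_of_depth_eq_of_lateral_eq (hn : 0 < V.n0 ^ 2 + V.n1 ^ 2) {p p' : Pt}
    (hd : V.depth p = V.depth p') (hl : V.lateral p = V.lateral p') : p = p' := by
  simp only [depth, lateral] at hd hl
  have h0 : (p 0 - p' 0) * (V.n0 ^ 2 + V.n1 ^ 2) = 0 := by
    linear_combination V.n0 * hd - V.n1 * hl
  have h1 : (p 1 - p' 1) * (V.n0 ^ 2 + V.n1 ^ 2) = 0 := by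
    linear_combination V.n1 * hd + V.n0 * hl
  ext i
  fin_cases i
  · exact sub_eq_zero.1 ((mul_eq_zero.1 h0).resolve_right hn.ne')
  · exact sub_eq_zero.1 ((mul_eq_zero.1 h1).resolve_right hn.ne')

theorem cross_pos_and_add_lt_of_mem_interior (hxy : 0 < V.cross x y)
    (hp : p ∈ interior (convexHull ℝ {V.q, x, y})) :
    0 < V.cross p y ∧ 0 < V.cross x p ∧ V.cross p y + V.cross x p < V.cross x y := by
  have hc : -V.cross x y < 0 := neg_neg_of_pos hxy
  refine ⟨?_, ?_, ?_⟩
  · refine pos_of_mem_interior_convexHull (L := (V.cross · y)) (fun _ _ _ _ => cross_combo_left)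
      ?_ hp hc (w := V.q - x) fun t => ?_
    · rintro z (rfl | rfl | rfl) <;> simp [hxy.le]
    · rw [cross_add_smul_sub_left, cross_q_left]; ring
  · refine pos_of_mem_interior_convexHull (L := V.cross x) (fun _ _ _ _ => cross_combo_right)
      ?_ hp hc (w := V.q - y) fun t => ?_
    · rintro z (rfl | rfl | rfl) <;> simp [hxy.le]
    · rw [cross_add_smul_sub_right, cross_q_right]; ring
  · have := pos_of_mem_interior_convexHull (L := fun z => V.cross x y - V.cross z y - V.cross x z)
      (fun a b s t h => by
        simp only [cross_combo_left h, cross_combo_right h]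
        linear_combination (-V.cross x y) * h) ?_ hp hc (w := x - V.q) fun t => ?_
    · linarith
    · rintro z (rfl | rfl | rfl) <;> simp [hxy.le]
    · simp only [cross_add_smul_sub_left, cross_add_smul_sub_right, cross_self, cross_q_left,
        cross_q_right]
      ring

theorem interior_convexHull_eq_empty_of_cross_eq_zero (hn : 0 < V.n0 ^ 2 + V.n1 ^ 2)
    (hy : 0 < V.depth y) (hxy : V.cross x y = 0) : interior (convexHull ℝ {V.q, x, y}) = ∅ := by
  refine Set.eq_empty_iff_forall_notMem.2 fun p hp => ?_
  have hvert : ∀ z ∈ ({V.q, x, y} : Set Pt), V.cross z y = 0 := by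
    rintro z (rfl | rfl | rfl) <;> simp [hxy]
  -- `r - q` is `n` turned by a right angle, transversal to the degenerate triangle
  set r : Pt := V.q + !₂[-V.n1, V.n0]
  have hr : V.cross r y = -((V.n0 ^ 2 + V.n1 ^ 2) * V.depth y) := by
    simp only [r, cross, depth, lateral, PiLp.add_apply]
    simp
    ring
  have hpos := pos_of_mem_interior_convexHull (L := (V.cross · y))
    (fun _ _ _ _ => cross_combo_left) (fun z hz => (hvert z hz).ge) hp
    (neg_neg_of_pos (mul_pos hn hy)) (w := r - V.q)
    fun t => by rw [cross_add_smul_sub_left, hr, cross_q_left]; ring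
  have hneg := convexHull_subset_setOf_nonneg (L := fun z => -V.cross z y)
    (fun a b s t h => by simp only [cross_combo_left h]; ring) (fun z hz => by simp [hvert z hz])
    (interior_subset hp)
  exact (hneg.trans_lt (neg_neg_of_pos hpos)).false

theorem depth_mul_chordDen (hp : V.depth p ≠ 0) :
    V.depth p * V.chordDen x y (V.slope p) = V.cross p y + V.cross x p := by
  simp only [chordDen, cross, slope]
  field_simp

theorem chordDen_pos (hx : 0 < V.depth x) (hy : 0 < V.depth y) (hxy : V.slope x < V.slope y)
    (hs : s ∈ Icc (V.slope x) (V.slope y)) : 0 < V.chordDen x y s := by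
  have hl : V.lateral y - s * V.depth y = V.depth y * (V.slope y - s) := by
    rw [lateral_eq_slope_mul hy.ne']; ring
  have hr : s * V.depth x - V.lateral x = V.depth x * (s - V.slope x) := by
    rw [lateral_eq_slope_mul hx.ne']; ring
  rw [chordDen, hl, hr]
  rcases hs.2.lt_or_eq with h | rfl
  · nlinarith [mul_pos hy (sub_pos.2 h), mul_nonneg hx.le (sub_nonneg.2 hs.1)]
  · nlinarith [mul_pos hx (sub_pos.2 hxy)]

theorem depth_chordPoint (h : V.chordDen x y s ≠ 0) :
    V.depth (V.chordPoint x y s) = V.chordDepth x y s := by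
  rw [chordPoint, depth_combo (by field_simp; rfl), chordDepth, cross]
  field_simp
  ring

theorem lateral_chordPoint (h : V.chordDen x y s ≠ 0) :
    V.lateral (V.chordPoint x y s) = s * V.chordDepth x y s := by
  rw [chordPoint, lateral_combo (by field_simp; rfl), chordDepth, cross]
  field_simp
  ring

theorem chordPoint_mem_openSegment (hx : 0 < V.depth x) (hy : 0 < V.depth y)
    (hs : s ∈ Ioo (V.slope x) (V.slope y)) : V.chordPoint x y s ∈ openSegment ℝ x y := by
  have hden := chordDen_pos hx hy (hs.1.trans hs.2) (Ioo_subset_Icc_self hs)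
  refine ⟨_, _, div_pos ?_ hden, div_pos ?_ hden,
    by rw [← add_div]; exact div_self hden.ne', rfl⟩
  · rw [lateral_eq_slope_mul hy.ne']; nlinarith [mul_pos hy (sub_pos.2 hs.2)]
  · rw [lateral_eq_slope_mul hx.ne']; nlinarith [mul_pos hx (sub_pos.2 hs.1)]

theorem continuousOn_chordDepth (hx : 0 < V.depth x) (hy : 0 < V.depth y)
    (hxy : V.slope x < V.slope y) :
    ContinuousOn (V.chordDepth x y) (Icc (V.slope x) (V.slope y)) :=
  continuousOn_const.div (by unfold chordDen; fun_prop)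
    fun _ hs => (chordDen_pos hx hy hxy hs).ne'

theorem slope_mem_Icc_and_depth_eq_of_mem_segment (hx : 0 < V.depth x) (hy : 0 < V.depth y)
    (hxy : V.slope x < V.slope y) (hp : p ∈ segment ℝ x y) :
    V.slope p ∈ Icc (V.slope x) (V.slope y) ∧ V.depth p = V.chordDepth x y (V.slope p) := by
  obtain ⟨a, b, ha, hb, hab, rfl⟩ := hp
  have hD := (slope_lt_slope_iff hx hy).1 hxy
  have hpos : 0 < V.depth (a • x + b • y) := by
    rw [depth_combo hab]
    rcases ha.lt_or_eq with ha | rfl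
    · positivity
    · nlinarith
  refine ⟨⟨(slope_le_slope_iff hx hpos).2 ?_, (slope_le_slope_iff hpos hy).2 ?_⟩, ?_⟩
  · rw [cross_combo_right hab, cross_self]; positivity
  · rw [cross_combo_left hab, cross_self]; positivity
  · have hden := depth_mul_chordDen (x := x) (y := y) hpos.ne'
    rw [cross_combo_left hab, cross_combo_right hab, cross_self, cross_self] at hden
    rw [chordDepth, eq_div_iff (by nlinarith)]
    linear_combination hden + V.cross x y * hab

theorem slope_mem_Ioo_and_depth_lt_of_mem_interior (hx : 0 < V.depth x) (hy : 0 < V.depth y)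
    (hxy : V.slope x < V.slope y) (hp : p ∈ interior (convexHull ℝ {V.q, x, y})) :
    V.slope p ∈ Ioo (V.slope x) (V.slope y) ∧ V.depth p < V.chordDepth x y (V.slope p) := by
  have hD := (slope_lt_slope_iff hx hy).1 hxy
  obtain ⟨hpy, hxp, hsum⟩ := cross_pos_and_add_lt_of_mem_interior hD hp
  have hpos : 0 < V.depth p := by
    have : V.depth p * V.cross x y = V.cross p y * V.depth x + V.cross x p * V.depth y := by
      simp only [cross]; ring
    nlinarith [mul_pos hpy hx, mul_pos hxp hy]
  refine ⟨⟨(slope_lt_slope_iff hx hpos).2 hxp, (slope_lt_slope_iff hpos hy).2 hpy⟩, ?_⟩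
  have hden := depth_mul_chordDen (x := x) (y := y) hpos.ne'
  rw [chordDepth, lt_div_iff₀ (by nlinarith)]
  nlinarith

end Slope

theorem exists_depth_pos {K : Set Pt} (hK : Convex ℝ K) (hKc : IsClosed K) {q : Pt}
    (hq : q ∉ K) : ∃ V : View, V.q = q ∧ ∀ p ∈ K, 0 < V.depth p := by
  obtain ⟨f, u, hfq, hfK⟩ := geometric_hahn_banach_point_closed hK hKc hq
  obtain ⟨n, hf⟩ : ∃ n : Pt, ∀ p : Pt, f p = n 0 * p 0 + n 1 * p 1 :=
    ⟨(InnerProductSpace.toDual ℝ Pt).symm f, fun p => by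
      rw [← InnerProductSpace.toDual_symm_apply (𝕜 := ℝ),
        EuclideanSpace.inner_eq_star_dotProduct]
      simp [dotProduct, Fin.sum_univ_two, mul_comm]⟩
  refine ⟨⟨q, n 0, n 1⟩, rfl, fun p hp => ?_⟩
  have := hfK p hp
  rw [hf] at this hfq
  simp only [depth]
  linarith

theorem n_sq_pos_of_depth_ne_zero {p : Pt} (hp : V.depth p ≠ 0) :
    0 < V.n0 ^ 2 + V.n1 ^ 2 := by
  by_contra! h
  obtain ⟨h0, h1⟩ : V.n0 = 0 ∧ V.n1 = 0 := by constructor <;> nlinarith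
  simp [depth, h0, h1] at hp

end View

structure Scene extends View where
  S : Finset Pt
  G : SimpleGraph ↥S
  plane : PlaneGraph G
  connected : G.Connected
  two_le_card : 2 ≤ S.card
  depth_pos : ∀ p ∈ convexHull ℝ (S : Set Pt), 0 < toView.depth p
  not_radial : ∀ u v : ↥S, G.Adj u v → toView.cross u v ≠ 0

namespace Scene

variable (C : Scene)

def slopes : Finset ℝ := C.S.image C.slope

structure IsArc (e : ↥C.S × ↥C.S) : Prop where
  adj : C.G.Adj e.1 e.2
  slope_lt : C.slope e.1 < C.slope e.2

def depthAt (e : ↥C.S × ↥C.S) (s : ℝ) : ℝ := C.chordDepth e.1 e.2 s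

def Covers (e : ↥C.S × ↥C.S) (a b : ℝ) : Prop := C.slope e.1 ≤ a ∧ b ≤ C.slope e.2

structure IsFront (e : ↥C.S × ↥C.S) (a b : ℝ) : Prop where
  isArc : C.IsArc e
  covers : C.Covers e a b
  le : ∀ e', C.IsArc e' → C.Covers e' a b →
    ∀ s ∈ Icc a b, C.depthAt e s ≤ C.depthAt e' s

structure IsFullFront (e : ↥C.S × ↥C.S) : Prop where
  isArc : C.IsArc e
  isFront : ∀ a b, IsGap C.slopes a b → C.Covers e a b → C.IsFront e a b

variable {C}

theorem depth_vertex_pos (w : ↥C.S) : 0 < C.depth w :=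
  C.depth_pos w (subset_convexHull ℝ _ w.2)

theorem slope_mem_slopes (w : ↥C.S) : C.slope w ∈ C.slopes := Finset.mem_image_of_mem _ w.2

theorem n_sq_pos : 0 < C.n0 ^ 2 + C.n1 ^ 2 := by
  obtain ⟨w, hw⟩ := Finset.card_pos.1 (zero_lt_two.trans_le C.two_le_card)
  exact View.n_sq_pos_of_depth_ne_zero (depth_vertex_pos ⟨w, hw⟩).ne'

theorem exists_adj (w : ↥C.S) : ∃ y, C.G.Adj w y := by
  obtain ⟨y, hy, hne⟩ := Finset.exists_mem_ne C.two_le_card (w : Pt)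
  obtain ⟨p⟩ := C.connected.preconnected w ⟨y, hy⟩
  cases p with
  | nil => exact absurd rfl hne
  | cons h _ => exact ⟨_, h⟩

theorem isArc_or_isArc_swap {u v : ↥C.S} (h : C.G.Adj u v) :
    C.IsArc (u, v) ∨ C.IsArc (v, u) := by
  rcases lt_trichotomy (C.slope u) (C.slope v) with huv | huv | huv
  · exact Or.inl ⟨h, huv⟩
  · refine absurd ?_ (C.not_radial u v h)
    have h1 := (View.slope_le_slope_iff (depth_vertex_pos u) (depth_vertex_pos v)).1 huv.le
    have h2 := (View.slope_le_slope_iff (depth_vertex_pos v) (depth_vertex_pos u)).1 huv.ge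
    rw [View.cross_swap] at h2
    linarith
  · exact Or.inr ⟨h.symm, huv⟩

theorem Covers.Icc_subset {e : ↥C.S × ↥C.S} {a b : ℝ} (h : C.Covers e a b) :
    Icc a b ⊆ Icc (C.slope e.1) (C.slope e.2) :=
  Icc_subset_Icc h.1 h.2

theorem Covers.Ioo_subset {e : ↥C.S × ↥C.S} {a b : ℝ} (h : C.Covers e a b) :
    Ioo a b ⊆ Ioo (C.slope e.1) (C.slope e.2) :=
  Ioo_subset_Ioo h.1 h.2

theorem IsArc.continuousOn_depthAt {e : ↥C.S × ↥C.S} (he : C.IsArc e) :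
    ContinuousOn (C.depthAt e) (Icc (C.slope e.1) (C.slope e.2)) :=
  View.continuousOn_chordDepth (depth_vertex_pos _) (depth_vertex_pos _) he.slope_lt

section Fronts

variable {e f : ↥C.S × ↥C.S} {a b c s : ℝ}

theorem depthAt_ne (he : C.IsArc e) (hf : C.IsArc f) (hne : e ≠ f)
    (hse : s ∈ Ioo (C.slope e.1) (C.slope e.2)) (hsf : s ∈ Ioo (C.slope f.1) (C.slope f.2)) :
    C.depthAt e s ≠ C.depthAt f s := by
  intro heq
  have hden {g : ↥C.S × ↥C.S} (hg : C.IsArc g) (hs : s ∈ Ioo (C.slope g.1) (C.slope g.2)) :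
      C.chordDen g.1 g.2 s ≠ 0 :=
    (View.chordDen_pos (depth_vertex_pos _) (depth_vertex_pos _) hg.slope_lt
      (Ioo_subset_Icc_self hs)).ne'
  have hpt : C.chordPoint e.1 e.2 s = C.chordPoint f.1 f.2 s :=
    View.eq_of_depth_eq_of_lateral_eq n_sq_pos
      (by rw [View.depth_chordPoint (hden he hse), View.depth_chordPoint (hden hf hsf)]; exact heq)
      (by rw [View.lateral_chordPoint (hden he hse), View.lateral_chordPoint (hden hf hsf)]
          exact congrArg (s * ·) heq)
  have hsym : s(e.1, e.2) ≠ s(f.1, f.2) := by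
    rw [Ne, Sym2.eq_iff]
    rintro (⟨h1, h2⟩ | ⟨h1, h2⟩)
    · exact hne (Prod.ext h1 h2)
    · have := he.slope_lt
      rw [h1, h2] at this
      exact this.not_gt hf.slope_lt
  refine C.plane _ he.adj _ hf.adj hsym ⟨e.1, e.2, f.1, f.2, rfl, rfl, _,
    View.chordPoint_mem_openSegment (depth_vertex_pos _) (depth_vertex_pos _) hse, ?_⟩
  rw [hpt]
  exact View.chordPoint_mem_openSegment (depth_vertex_pos _) (depth_vertex_pos _) hsf

theorem exists_isFront (hab : IsGap C.slopes a b) : ∃ f, C.IsFront f a b := by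
  set m := (a + b) / 2
  have hm : m ∈ Ioo a b := ⟨left_lt_add_div_two.2 hab.lt, add_div_two_lt_right.2 hab.lt⟩
  obtain ⟨w₁, hw₁, rfl⟩ := Finset.mem_image.1 hab.left_mem
  obtain ⟨w₂, hw₂, rfl⟩ := Finset.mem_image.1 hab.right_mem
  obtain ⟨x, y, hxy, hx, hy⟩ :=
    (C.connected.preconnected ⟨w₁, hw₁⟩ ⟨w₂, hw₂⟩).some.exists_adj_lt_le
      (fun w : ↥C.S => C.slope w) hm.1 hm.2.le
  set cov := Finset.univ.filter fun e => C.IsArc e ∧ C.Covers e (C.slope w₁) (C.slope w₂)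
  have hcov : (x, y) ∈ cov := Finset.mem_filter.2 ⟨Finset.mem_univ _, ⟨hxy, hx.trans_le hy⟩,
    hab.le_left (slope_mem_slopes x) (hx.trans hm.2),
    hab.right_le (slope_mem_slopes y) (hm.1.trans_le hy)⟩
  obtain ⟨f, hf, hmin⟩ := cov.exists_min_image (fun e => C.depthAt e m) ⟨_, hcov⟩
  obtain ⟨-, hfa, hfc⟩ := Finset.mem_filter.1 hf
  refine ⟨f, hfa, hfc, fun e he hce => ?_⟩
  obtain rfl | hfe := eq_or_ne f e
  · exact fun _ _ => le_rfl
  -- two arcs over a gap do not meet inside it, so the nearer one at the midpoint stays nearer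
  have key := nonneg_on_Icc_of_ne_zero (f := fun s => C.depthAt e s - C.depthAt f s)
    ((he.continuousOn_depthAt.mono hce.Icc_subset).sub
      (hfa.continuousOn_depthAt.mono hfc.Icc_subset)) hm
    (sub_nonneg.2 (hmin e (Finset.mem_filter.2 ⟨Finset.mem_univ _, he, hce⟩)))
    fun t ht => sub_ne_zero.2 (depthAt_ne hfa he hfe (hfc.Ioo_subset ht) (hce.Ioo_subset ht)).symm
  exact fun s hs => sub_nonneg.1 (key s hs)

theorem IsFront.eq_or_slope_eq {f' : ↥C.S × ↥C.S} (hab : IsGap C.slopes a b)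
    (hbc : IsGap C.slopes b c) (hf : C.IsFront f a b) (hf' : C.IsFront f' b c) :
    f = f' ∨ C.slope f.2 = b ∨ C.slope f'.1 = b := by
  by_contra! h
  obtain ⟨hne, hend, hstart⟩ := h
  have hfc : C.Covers f b c := ⟨hf.covers.1.trans hab.lt.le,
    hbc.right_le (slope_mem_slopes _) (hf.covers.2.lt_of_ne hend.symm)⟩
  have hf'c : C.Covers f' a b :=
    ⟨hab.le_left (slope_mem_slopes _) (hf'.covers.1.lt_of_ne hstart),
      hbc.lt.le.trans hf'.covers.2⟩
  refine depthAt_ne hf.isArc hf'.isArc hne ⟨hf.covers.1.trans_lt hab.lt, hbc.lt.trans_le hfc.2⟩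
    ⟨hf'c.1.trans_lt hab.lt, hbc.lt.trans_le hf'.covers.2⟩ (le_antisymm ?_ ?_)
  · exact hf.le f' hf'.isArc hf'c b (right_mem_Icc.2 hab.lt.le)
  · exact hf'.le f hf.isArc hfc b (left_mem_Icc.2 hbc.lt.le)

theorem exists_isArc : ∃ e, C.IsArc e := by
  obtain ⟨w, hw⟩ := Finset.card_pos.1 (zero_lt_two.trans_le C.two_le_card)
  obtain ⟨y, hy⟩ := exists_adj ⟨w, hw⟩
  exact (isArc_or_isArc_swap hy).elim (⟨_, ·⟩) (⟨_, ·⟩)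

theorem exists_isFront_slope_eq :
    ∃ a b f, IsGap C.slopes a b ∧ C.IsFront f a b ∧ C.slope f.2 = b := by
  obtain ⟨e, he⟩ := C.exists_isArc
  have hne : C.slopes.Nonempty := ⟨_, slope_mem_slopes e.1⟩
  have hmax := C.slopes.le_max' _ (slope_mem_slopes e.2)
  obtain ⟨a, b, hab, -, -, hb, -⟩ := exists_isGap (slope_mem_slopes e.1) (C.slopes.max'_mem hne)
    (he.slope_lt.trans_le hmax) (he.slope_lt.le.trans hmax) le_rfl
  obtain ⟨f, hf⟩ := exists_isFront hab
  exact ⟨a, b, f, hab, hf, le_antisymm ((C.slopes.le_max' _ (slope_mem_slopes f.2)).trans hb)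
    hf.covers.2⟩

theorem IsFront.isFullFront (hab : IsGap C.slopes a b) (hf : C.IsFront f a b)
    (hend : C.slope f.2 = b)
    (hmin : ∀ a' b' f', IsGap C.slopes a' b' → C.IsFront f' a' b' → C.slope f'.2 = b' →
      b ≤ b') :
    C.IsFullFront f := by
  refine ⟨hf.isArc, fun a₁ b₁ hgap₁ hcov₁ => ?_⟩
  by_contra hbad₁
  set bad := C.slopes.filter fun b' => ∃ a', IsGap C.slopes a' b' ∧ C.Covers f a' b' ∧
    ¬ C.IsFront f a' b'
  have hne : bad.Nonempty :=
    ⟨b₁, Finset.mem_filter.2 ⟨hgap₁.right_mem, a₁, hgap₁, hcov₁, hbad₁⟩⟩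
  -- `b'` is the top of the highest gap spanned by `f` of which `f` is not the front
  obtain ⟨b', hb', hmax⟩ : ∃ b' ∈ bad, ∀ x ∈ bad, x ≤ b' :=
    ⟨_, bad.max'_mem hne, fun x hx => bad.le_max' x hx⟩
  obtain ⟨-, a', hgap, hcov, hbad⟩ := Finset.mem_filter.1 hb'
  rcases (hcov.2.trans hend.le).lt_or_eq with hlt | heq
  · obtain ⟨a'', c, hbc, hba'', ha''b, -, hcb⟩ :=
      exists_isGap hgap.right_mem hab.right_mem hlt le_rfl hlt.le
    obtain rfl : a'' = b' := le_antisymm ha''b hba''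
    have hfront : C.IsFront f a'' c := by
      by_contra hnf
      exact (hmax c (Finset.mem_filter.2 ⟨hbc.right_mem, a'', hbc,
        ⟨hcov.1.trans hgap.lt.le, hcb.trans hend.ge⟩, hnf⟩)).not_gt hbc.lt
    obtain ⟨f', hf'⟩ := exists_isFront hgap
    rcases hf'.eq_or_slope_eq hgap hbc hfront with rfl | hend' | hstart
    · exact hbad hf'
    · exact (hmin _ _ _ hgap hf' hend').not_gt hlt
    · exact (hcov.1.trans_lt hgap.lt).ne hstart
  · subst heq
    exact hbad (hgap.left_unique hab ▸ hend ▸ hf)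

theorem exists_isFullFront : ∃ e, C.IsFullFront e := by
  set ends := C.slopes.filter fun b => ∃ a f, IsGap C.slopes a b ∧ C.IsFront f a b ∧
    C.slope f.2 = b
  obtain ⟨a, b, f, hab, hf, hend⟩ := C.exists_isFront_slope_eq
  have hne : ends.Nonempty := ⟨b, Finset.mem_filter.2 ⟨hab.right_mem, a, f, hab, hf, hend⟩⟩
  obtain ⟨-, a₀, f₀, hab₀, hf₀, hend₀⟩ := Finset.mem_filter.1 (ends.min'_mem hne)
  exact ⟨f₀, hf₀.isFullFront hab₀ hend₀ fun a' b' f' hgap hf' hend' =>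
    ends.min'_le b' (Finset.mem_filter.2 ⟨hgap.right_mem, a', f', hgap, hf', hend'⟩)⟩

theorem IsFullFront.notMem_interior (he : C.IsFullFront e) {u v : ↥C.S} (huv : C.G.Adj u v)
    {p : Pt} (hp : p ∈ segment ℝ (u : Pt) v) :
    p ∉ interior (convexHull ℝ {C.q, (e.1 : Pt), (e.2 : Pt)}) := by
  intro hint
  obtain ⟨hse, hlt⟩ := View.slope_mem_Ioo_and_depth_lt_of_mem_interior (depth_vertex_pos e.1)
    (depth_vertex_pos e.2) he.isArc.slope_lt hint
  obtain ⟨g, hg, hpg⟩ : ∃ g, C.IsArc g ∧ p ∈ segment ℝ (g.1 : Pt) g.2 :=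
    (isArc_or_isArc_swap huv).elim (fun h => ⟨_, h, hp⟩)
      (fun h => ⟨_, h, segment_symm ℝ (u : Pt) v ▸ hp⟩)
  obtain ⟨hsg, hdepth⟩ := View.slope_mem_Icc_and_depth_eq_of_mem_segment (depth_vertex_pos g.1)
    (depth_vertex_pos g.2) hg.slope_lt hpg
  obtain ⟨a, b, hab, hla, has, hsb, hbr⟩ := exists_isGap
    (max_rec' (· ∈ C.slopes) (slope_mem_slopes e.1) (slope_mem_slopes g.1))
    (min_rec' (· ∈ C.slopes) (slope_mem_slopes e.2) (slope_mem_slopes g.2))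
    (max_lt (lt_min he.isArc.slope_lt (hse.1.trans_le hsg.2))
      (lt_min (hsg.1.trans_lt hse.2) hg.slope_lt))
    (max_le hse.1.le hsg.1) (le_min hse.2.le hsg.2)
  have hle := (he.isFront a b hab ⟨(le_max_left _ _).trans hla, hbr.trans (min_le_left _ _)⟩).le
    g hg ⟨(le_max_right _ _).trans hla, hbr.trans (min_le_right _ _)⟩ _ ⟨has, hsb⟩
  exact (hlt.trans_le hle).ne hdepth

end Fronts

end Scene

/-- If `G` is a connected plane geometric graph with at least two
vertices and `q` is a point strictly outside the convex hull of the vertices of `G`,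
then `q` sees an edge `(a, b)` of `G`: the interior of the triangle `q a b` is disjoint
from all vertices and all edges of `G`. -/
theorem point_outside_hull_sees_edge
    (S : Finset Pt) (hcard : 2 ≤ S.card) (G : SimpleGraph ↥S)
    (hconn : G.Connected) (hplane : PlaneGraph G)
    (q : Pt) (hq : q ∉ convexHull ℝ (S : Set Pt)) :
    ∃ a b : ↥S, G.Adj a b ∧
      ∀ p ∈ interior (convexHull ℝ ({q, ↑a, ↑b} : Set Pt)),
        p ∉ (S : Set Pt) ∧ ∀ u v : ↥S, G.Adj u v → p ∉ segment ℝ (u : Pt) (v : Pt) := by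
  obtain ⟨V, rfl, hV⟩ := View.exists_depth_pos (convex_convexHull ℝ _)
    (S.finite_toSet.isCompact_convexHull (𝕜 := ℝ)).isClosed hq
  by_cases hrad : ∃ u v : ↥S, G.Adj u v ∧ V.cross u v = 0
  · obtain ⟨u, v, huv, h0⟩ := hrad
    have hv := hV v (subset_convexHull ℝ _ v.2)
    refine ⟨u, v, huv, fun p hp => ?_⟩
    rw [View.interior_convexHull_eq_empty_of_cross_eq_zero
      (View.n_sq_pos_of_depth_ne_zero hv.ne') hv h0] at hp
    exact hp.elim
  simp only [not_exists, not_and] at hrad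
  let C : Scene := ⟨V, S, G, hplane, hconn, hcard, hV, hrad⟩
  obtain ⟨e, he⟩ := C.exists_isFullFront
  refine ⟨e.1, e.2, he.isArc.adj, fun p hp => ⟨fun hpS => ?_, fun u v huv hpuv =>
    he.notMem_interior huv hpuv hp⟩⟩
  obtain ⟨y, hy⟩ := Scene.exists_adj (C := C) ⟨p, hpS⟩
  exact he.notMem_interior hy (left_mem_segment ℝ _ _) hp
end
end

section
/- Let T be a minimum bichromatic spanning tree of a finite bicolored point set S in the plane in general position, and let (r,b) be an edge of T whose endpoints form a closest bichromatic pair of S. Then (r,b) is not crossed by any other edge of T. -/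
/-!
Suppose an edge `cd` of `T` (with `c` red, `d` blue) crosses `rb` at `p`. The triangle
inequality through `p` gives `|rd| + |cb| < |rb| + |cd|`, strictly by general position. As `rb`
is a closest bichromatic pair, `|rb| ≤ |rd|` and `|rb| ≤ |cb|`, so `rd` and `cb` are both
shorter than `cd`. Deleting `cd` splits `T` into two components, one of the bichromatic pairs
`rd`, `cb` reconnects them, and the resulting bichromatic spanning tree is shorter than `T`.
-/

open scoped Classical

noncomputable section

open SimpleGraph

section Geometry

variable {E : Type*}

theorem collinear_of_mem_openSegment_of_mem_segment [AddCommGroup E] [Module ℝ E]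
    {x y z p : E} (hy : p ∈ openSegment ℝ x y) (hz : p ∈ segment ℝ x z) :
    Collinear ℝ ({x, y, z} : Set E) := by
  rcases eq_or_ne x p with rfl | hxp
  · rw [left_mem_openSegment_iff.mp hy, Set.insert_eq_of_mem (Set.mem_insert _ _)]
    exact collinear_pair ℝ _ _
  have hy' : y ∈ line[ℝ, x, p] :=
    (mem_segment_iff_wbtw.mp (openSegment_subset_segment ℝ x y hy)).collinear
      |>.mem_affineSpan_of_mem_of_ne (by simp) (by simp) (by simp) hxp
  have hz' : z ∈ line[ℝ, x, p] :=
    (mem_segment_iff_wbtw.mp hz).collinear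
      |>.mem_affineSpan_of_mem_of_ne (by simp) (by simp) (by simp) hxp
  exact collinear_triple_of_mem_affineSpan_pair (left_mem_affineSpan_pair ℝ x p) hy' hz'

theorem dist_add_dist_lt_of_mem_openSegment [NormedAddCommGroup E] [NormedSpace ℝ E]
    [StrictConvexSpace ℝ E] {a b c d p : E} (hab : p ∈ openSegment ℝ a b)
    (hcd : p ∈ openSegment ℝ c d)
    (h : ¬Collinear ℝ ({a, b, d} : Set E) ∨ ¬Collinear ℝ ({a, b, c} : Set E)) :
    dist a d + dist c b < dist a b + dist c d := by
  have hapb := dist_add_dist_of_mem_segment (openSegment_subset_segment ℝ _ _ hab)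
  have hcpd := dist_add_dist_of_mem_segment (openSegment_subset_segment ℝ _ _ hcd)
  suffices dist a d < dist a p + dist p d ∨ dist c b < dist c p + dist p b by
    rcases this with h | h <;> linarith [dist_triangle a p d, dist_triangle c p b]
  refine h.imp (fun hnc => (dist_triangle a p d).lt_of_ne fun heq => hnc ?_)
    (fun hnc => (dist_triangle c p b).lt_of_ne fun heq => hnc ?_)
  · exact collinear_of_mem_openSegment_of_mem_segment hab
      (dist_add_dist_eq_iff.mp heq.symm).mem_segment
  · rw [Set.insert_comm]
    rw [openSegment_symm] at hab
    exact collinear_of_mem_openSegment_of_mem_segment hab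
      (segment_symm ℝ c b ▸ (dist_add_dist_eq_iff.mp heq.symm).mem_segment)

end Geometry

namespace SimpleGraph

variable {V : Type*} {G : SimpleGraph V} {c d u v x : V}

theorem IsBridge.reachable_deleteEdges_or (hb : G.IsBridge s(c, d)) (hx : G.Reachable x c) :
    (G.deleteEdges {s(c, d)}).Reachable x c ∨ (G.deleteEdges {s(c, d)}).Reachable x d := by
  by_contra! ⟨hxc, hxd⟩
  obtain ⟨w⟩ := hx
  -- the path must use `cd`, which a trail cannot do when neither of its ends reaches `d`
  exact w.bypass_isPath.isTrail.not_mem_edges_of_not_reachable hxd (isBridge_iff.mp hb)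
    (w.bypass.mem_edges_of_not_reachable_deleteEdges hxc)

theorem IsBridge.not_reachable_deleteEdges (hb : G.IsBridge s(c, d))
    (hu : (G.deleteEdges {s(c, d)}).Reachable u c) (hv : (G.deleteEdges {s(c, d)}).Reachable v d) :
    ¬(G.deleteEdges {s(c, d)}).Reachable u v :=
  fun huv => isBridge_iff.mp hb (hu.symm.trans (huv.trans hv))

theorem IsTree.isBridge (hG : G.IsTree) (hcd : G.Adj c d) : G.IsBridge s(c, d) :=
  isAcyclic_iff_forall_adj_isBridge.mp hG.isAcyclic hcd

theorem IsTree.deleteEdges_sup_edge (hG : G.IsTree) (hcd : G.Adj c d)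
    (hu : (G.deleteEdges {s(c, d)}).Reachable u c) (hv : (G.deleteEdges {s(c, d)}).Reachable v d) :
    (G.deleteEdges {s(c, d)} ⊔ edge u v).IsTree := by
  set F := G.deleteEdges {s(c, d)}
  have hb := hG.isBridge hcd
  have huv := hb.not_reachable_deleteEdges hu hv
  refine ⟨?_, (hG.isAcyclic.anti (deleteEdges_le _)).sup_edge_of_not_reachable huv⟩
  have hmono : F ≤ F ⊔ edge u v := le_sup_left
  have hedge : (F ⊔ edge u v).Adj u v :=
    Or.inr ((edge_adj ..).mpr ⟨Or.inl ⟨rfl, rfl⟩, fun h => huv (h ▸ .refl u)⟩)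
  have hdc : (F ⊔ edge u v).Reachable d c :=
    ((hu.mono hmono).symm.trans (hedge.reachable.trans (hv.mono hmono))).symm
  refine (connected_iff_exists_forall_reachable _).2 ⟨c, fun x => ?_⟩
  rcases hb.reachable_deleteEdges_or (hG.connected.preconnected x c) with hxc | hxd
  · exact (hxc.mono hmono).symm
  · exact hdc.symm.trans (hxd.mono hmono).symm

end SimpleGraph

section BichromaticTree

variable {S : Finset Pt} {col : Pt → Bool} {G T : SimpleGraph ↥S} {c d u v : ↥S}

@[simp]
theorem edgeLen_mk (u v : ↥S) : edgeLen s(u, v) = dist (u : Pt) v := rfl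

theorem graphLen_sup_edge (huv : u ≠ v) (h : ¬G.Adj u v) :
    graphLen (G ⊔ edge u v) = graphLen G + dist (u : Pt) v := by
  rw [graphLen, edgeSet_sup, edgeSet_edge_of_ne huv, Set.union_singleton,
    finsum_mem_insert _ (mt G.mem_edgeSet.mp h) (Set.toFinite _), edgeLen_mk, add_comm, graphLen]

theorem graphLen_deleteEdges_add (h : G.Adj c d) :
    graphLen (G.deleteEdges {s(c, d)}) + dist (c : Pt) d = graphLen G := by
  rw [graphLen, graphLen, edgeSet_deleteEdges, add_comm, ← edgeLen_mk,
    ← finsum_mem_insert _ (fun h => h.2 rfl) (Set.toFinite _), Set.insert_sdiff_singleton,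
    Set.insert_eq_of_mem (G.mem_edgeSet.mpr h)]

theorem Bichromatic.exists_adj_eq_mk (hG : Bichromatic col G) {e : Sym2 ↥S}
    (he : e ∈ G.edgeSet) :
    ∃ c d, G.Adj c d ∧ e = s(c, d) ∧ col c = true ∧ col d = false := by
  induction e using Sym2.ind with
  | h x y =>
    have hxy := hG x y he
    cases hx : col x
    · exact ⟨y, x, G.adj_symm he, Sym2.eq_swap, by simpa [hx] using hxy.symm, hx⟩
    · exact ⟨x, y, he, rfl, hx, by simpa [hx] using hxy.symm⟩

theorem EdgeCross.segCross {a b : ↥S} (h : EdgeCross s(a, b) s(c, d)) : SegCross a b c d := by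
  obtain ⟨a', b', c', d', hab, hcd, p, hp₁, hp₂⟩ := h
  refine ⟨p, ?_, ?_⟩
  · rcases Sym2.eq_iff.mp hab with ⟨rfl, rfl⟩ | ⟨rfl, rfl⟩
    exacts [hp₁, openSegment_symm ℝ (b : Pt) a ▸ hp₁]
  · rcases Sym2.eq_iff.mp hcd with ⟨rfl, rfl⟩ | ⟨rfl, rfl⟩
    exacts [hp₂, openSegment_symm ℝ (d : Pt) c ▸ hp₂]

theorem GenPos.not_collinear_or_not_collinear (hgp : GenPos S) {r b : ↥S} (hrb : r ≠ b)
    (hrd : r ≠ d) (hcb : c ≠ b) (hne : s(c, d) ≠ s(r, b)) :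
    ¬Collinear ℝ ({(r : Pt), (b : Pt), (d : Pt)} : Set Pt) ∨
      ¬Collinear ℝ ({(r : Pt), (b : Pt), (c : Pt)} : Set Pt) := by
  by_cases hdb : d = b
  · subst hdb
    have hrc : r ≠ c := fun h => hne (h ▸ rfl)
    exact .inr (hgp r r.2 d d.2 c c.2 (Subtype.coe_ne_coe.mpr hrb) (Subtype.coe_ne_coe.mpr hrc)
      (Subtype.coe_ne_coe.mpr hcb.symm))
  · exact .inl (hgp r r.2 b b.2 d d.2 (Subtype.coe_ne_coe.mpr hrb) (Subtype.coe_ne_coe.mpr hrd)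
      (Subtype.coe_ne_coe.mpr (Ne.symm hdb)))

theorem IsMinBST.dist_le_of_reachable_deleteEdges (hT : IsMinBST col T) (hcd : T.Adj c d)
    (hu : (T.deleteEdges {s(c, d)}).Reachable u c) (hv : (T.deleteEdges {s(c, d)}).Reachable v d)
    (huv : col u ≠ col v) : dist (c : Pt) d ≤ dist (u : Pt) v := by
  have hbi : Bichromatic col (T.deleteEdges {s(c, d)} ⊔ edge u v) := by
    rintro x y (hxy | hxy)
    · exact hT.1.2 x y (deleteEdges_le _ hxy)
    · rcases ((edge_adj ..).mp hxy).1 with ⟨rfl, rfl⟩ | ⟨rfl, rfl⟩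
      exacts [huv, huv.symm]
  have hle := hT.2 _ ⟨hT.1.1.deleteEdges_sup_edge hcd hu hv, hbi⟩
  rw [graphLen_sup_edge (ne_of_apply_ne (col ∘ Subtype.val) huv)
    fun h => (hT.1.1.isBridge hcd).not_reachable_deleteEdges hu hv h.reachable,
    ← graphLen_deleteEdges_add hcd] at hle
  linarith

/-- Once `cd` is deleted, `b` lies on the side of `r`, so `rd` or `cb` joins the two sides. -/
theorem IsMinBST.dist_le_or_dist_le {r b : ↥S} (hT : IsMinBST col T) (hrb : T.Adj r b)
    (hcd : T.Adj c d) (hne : s(r, b) ≠ s(c, d)) (hrd : col r ≠ col d) (hcb : col c ≠ col b) :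
    dist (c : Pt) d ≤ dist (r : Pt) d ∨ dist (c : Pt) d ≤ dist (c : Pt) b := by
  rcases (hT.1.1.isBridge hcd).reachable_deleteEdges_or (hT.1.1.connected.preconnected r c)
    with hrc | hrd'
  · exact .inl (hT.dist_le_of_reachable_deleteEdges hcd hrc .rfl hrd)
  · have hbr : (T.deleteEdges {s(c, d)}).Adj b r := (deleteEdges_adj ..).mpr ⟨hrb.symm, by
      simpa [Sym2.eq_swap] using hne⟩
    exact .inr (hT.dist_le_of_reachable_deleteEdges hcd .rfl (hbr.reachable.trans hrd') hcb)

end BichromaticTree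

/-- If an edge `(r, b)` of a minimum bichromatic spanning tree `T`
of a bicolored point set in general position is a closest bichromatic pair, then no
other edge of `T` crosses it. -/
theorem minBST_closest_pair_edge_crossing_free
    (S : Finset Pt) (col : Pt → Bool) (hgp : GenPos S)
    (T : SimpleGraph ↥S) (hT : IsMinBST col T)
    (r b : ↥S) (hrb : T.Adj r b)
    (hcr : col ↑r = true) (hcb : col ↑b = false)
    (hmin : ∀ r' ∈ S, ∀ b' ∈ S, col r' = true → col b' = false →
      dist (r : Pt) (b : Pt) ≤ dist r' b') :
    ∀ e ∈ T.edgeSet, e ≠ s(r, b) → ¬ EdgeCross s(r, b) e := by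
  intro e he hne hcross
  obtain ⟨c, d, hcd, rfl, hc, hd⟩ := hT.1.2.exists_adj_eq_mk he
  obtain ⟨p, hp_rb, hp_cd⟩ := hcross.segCross
  have hne_of_col : ∀ x y : ↥S, col x ≠ col y → x ≠ y :=
    fun _ _ h => ne_of_apply_ne (col ∘ Subtype.val) h
  have hnc := hgp.not_collinear_or_not_collinear (hne_of_col r b (by simp [hcr, hcb]))
    (hne_of_col r d (by simp [hcr, hd])) (hne_of_col c b (by simp [hc, hcb])) hne
  have hcross_lt := dist_add_dist_lt_of_mem_openSegment hp_rb hp_cd hnc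
  have hcb_le := hmin c c.2 b b.2 hc hcb
  have hrd_le := hmin r r.2 d d.2 hcr hd
  rcases hT.dist_le_or_dist_le hrb hcd hne.symm (by simp [hcr, hd]) (by simp [hc, hcb])
    with h | h <;> linarith
end
end

section
/- For every bicolored point set S of n ≥ 3 points in the plane in general position containing at least one red and at least one blue point, every edge of every minimum bichromatic spanning tree of S crosses at most n − 3 other edges of the tree. -/
open scoped Classical

noncomputable section

/-- Two open segments sharing the endpoint `a` cannot cross if `a, b, d` are not
collinear. -/
lemma not_segCross_shared {a b d : Pt} (h : ¬ Collinear ℝ ({a, b, d} : Set Pt)) :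
    ¬ SegCross a b a d := by
  rintro ⟨p, hp1, hp2⟩
  rw [openSegment_eq_image] at hp1 hp2
  obtain ⟨t, ht, hpt⟩ := hp1
  obtain ⟨s, hs, hps⟩ := hp2
  have hs0 : s ≠ 0 := ne_of_gt hs.1
  apply h
  rw [collinear_iff_of_mem (Set.mem_insert a _)]
  refine ⟨b - a, ?_⟩
  rintro q hq
  simp only [Set.mem_insert_iff, Set.mem_singleton_iff] at hq
  rcases hq with rfl | rfl | rfl
  · exact ⟨0, by simp⟩
  · exact ⟨1, by simp⟩
  · refine ⟨t / s, ?_⟩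
    have key : s • q = t • b + (s - t) • a := by
      have heq : (1 - t) • a + t • b = (1 - s) • a + s • q := by
        simpa using hpt.trans hps.symm
      linear_combination (norm := module) -heq
    have hq : q = (s⁻¹ * s) • q := by rw [inv_mul_cancel₀ hs0, one_smul]
    rw [hq, mul_smul, key]
    simp only [vadd_eq_add]
    match_scalars <;> (field_simp; try ring)

lemma segCross_comm_left {a b c d : Pt} (h : SegCross a b c d) : SegCross b a c d := by
  obtain ⟨p, h1, h2⟩ := h
  exact ⟨p, by rwa [openSegment_symm], h2⟩

lemma segCross_comm_right {a b c d : Pt} (h : SegCross a b c d) : SegCross a b d c := by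
  obtain ⟨p, h1, h2⟩ := h
  exact ⟨p, h1, by rwa [openSegment_symm]⟩

/-- Crossing segments on points of a general-position set share no endpoint. -/
lemma no_cross_of_shared {S : Finset Pt} (hgp : GenPos S) {a b c d : ↥S}
    (hab : a ≠ b) (hcd : c ≠ d) (hne : s(a, b) ≠ s(c, d)) (hac : a = c) :
    ¬ SegCross ↑a ↑b ↑c ↑d := by
  subst hac
  have hbd : b ≠ d := by
    rintro rfl; exact hne rfl
  have hab' : (a : Pt) ≠ (b : Pt) := fun h => hab (Subtype.coe_injective h)
  have had' : (a : Pt) ≠ (d : Pt) := fun h => hcd (Subtype.coe_injective h)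
  have hbd' : (b : Pt) ≠ (d : Pt) := fun h => hbd (Subtype.coe_injective h)
  exact not_segCross_shared (hgp a a.2 b b.2 d d.2 hab' had' hbd')

/-- Crossing edges on a general-position point set are vertex disjoint. -/
lemma edgeCross_no_shared {S : Finset Pt} (hgp : GenPos S) {a b c d : ↥S}
    (hab : a ≠ b) (hcd : c ≠ d) (hne : s(a, b) ≠ s(c, d))
    (hcr : SegCross ↑a ↑b ↑c ↑d) (x : ↥S) (hx1 : x ∈ s(a, b)) (hx2 : x ∈ s(c, d)) :
    False := by
  rw [Sym2.mem_iff] at hx1 hx2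
  rcases hx1 with rfl | rfl <;> rcases hx2 with h2 | h2
  · exact no_cross_of_shared hgp hab hcd hne h2 hcr
  · refine no_cross_of_shared hgp hab hcd.symm ?_ h2 (segCross_comm_right hcr)
    simp only [ne_eq, Sym2.eq, Sym2.rel_iff', Prod.mk.injEq, Prod.swap_prod_mk] at hne ⊢
    tauto
  · refine no_cross_of_shared hgp hab.symm hcd ?_ h2 (segCross_comm_left hcr)
    simp only [ne_eq, Sym2.eq, Sym2.rel_iff', Prod.mk.injEq, Prod.swap_prod_mk] at hne ⊢
    tauto
  · refine no_cross_of_shared hgp hab.symm hcd.symm ?_ h2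
      (segCross_comm_right (segCross_comm_left hcr))
    simp only [ne_eq, Sym2.eq, Sym2.rel_iff', Prod.mk.injEq, Prod.swap_prod_mk] at hne ⊢
    tauto

/-- For every bicolored set of `n ≥ 3` points in general position
with at least one red and one blue point, every edge of every minimum bichromatic
spanning tree crosses at most `n − 3` other edges of the tree. -/
theorem minBST_edge_crossings_le
    (S : Finset Pt) (col : Pt → Bool) (hgp : GenPos S) (hn : 3 ≤ S.card)
    (hred : ∃ r ∈ S, col r = true) (hblue : ∃ b ∈ S, col b = false)
    (T : SimpleGraph ↥S) (hT : IsMinBST col T)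
    (e : Sym2 ↥S) (he : e ∈ T.edgeSet) :
    Nat.card {e' : Sym2 ↥S | e' ∈ T.edgeSet ∧ e' ≠ e ∧ EdgeCross e e'} ≤ S.card - 3 := by
  classical
  have htree : T.IsTree := hT.1.1
  haveI : Fintype ↥T.edgeSet := Fintype.ofFinite _
  induction e using Sym2.ind with
  | _ u v =>
  have hadj : T.Adj u v := he
  have huv : u ≠ v := hadj.ne
  set F : Finset (Sym2 ↥S) := T.edgeFinset with hF
  set A : Finset (Sym2 ↥S) := F.filter (fun f => u ∈ f ∨ v ∈ f) with hA
  -- `e` itself is in `A`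
  have heA : s(u, v) ∈ A := by
    rw [hA, Finset.mem_filter]
    exact ⟨SimpleGraph.mem_edgeFinset.2 he, Or.inl (Sym2.mem_mk_left _ _)⟩
  -- there is another edge incident to `u` or `v`
  have hsecond : ∃ f ∈ A, f ≠ s(u, v) := by
    -- get a third vertex
    have hcard : Fintype.card ↥S = S.card := Fintype.card_coe S
    obtain ⟨w, hw⟩ : ∃ w : ↥S, w ∉ ({u, v} : Finset ↥S) := by
      by_contra hcon
      push_neg at hcon
      have : (Finset.univ : Finset ↥S) ⊆ {u, v} := fun x _ => hcon x
      have := Finset.card_le_card this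
      have h2 : ({u, v} : Finset ↥S).card ≤ 2 := Finset.card_insert_le _ _ |>.trans (by simp)
      simp only [Finset.card_univ, hcard] at this
      omega
    simp only [Finset.mem_insert, Finset.mem_singleton, not_or] at hw
    obtain ⟨hwu, hwv⟩ := hw
    obtain ⟨q⟩ := htree.isConnected.preconnected u w
    obtain ⟨p, hp⟩ : ∃ p : T.Walk u w, p.IsPath := ⟨(q.toPath : T.Path u w), q.toPath.isPath⟩
    obtain ⟨x, hux, p', hp'⟩ := SimpleGraph.Walk.exists_eq_cons_of_ne (Ne.symm hwu) p
    by_cases hxv : x = v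
    · subst hxv
      have hp'path : p'.IsPath ∧ u ∉ p'.support := by
        have := hp
        rw [hp'] at this
        rw [SimpleGraph.Walk.cons_isPath_iff] at this
        exact this
      obtain ⟨y, hvy, p'', hp''⟩ := SimpleGraph.Walk.exists_eq_cons_of_ne (Ne.symm hwv) p'
      have hyu : y ≠ u := by
        rintro rfl
        apply hp'path.2
        rw [hp'', SimpleGraph.Walk.support_cons]
        exact List.mem_cons_of_mem _ p''.start_mem_support
      refine ⟨s(x, y), ?_, ?_⟩
      · rw [hA, Finset.mem_filter]
        exact ⟨SimpleGraph.mem_edgeFinset.2 hvy, Or.inr (Sym2.mem_mk_left _ _)⟩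
      · intro h
        rcases Sym2.eq_iff.1 h with ⟨h1, h2⟩ | ⟨h1, h2⟩
        · exact huv h1.symm
        · exact hyu h2
    · refine ⟨s(u, x), ?_, ?_⟩
      · rw [hA, Finset.mem_filter]
        exact ⟨SimpleGraph.mem_edgeFinset.2 hux, Or.inl (Sym2.mem_mk_left _ _)⟩
      · intro h
        rcases Sym2.eq_iff.1 h with ⟨h1, h2⟩ | ⟨h1, h2⟩
        · exact hxv h2
        · exact huv h1
  have hA2 : 2 ≤ A.card := by
    obtain ⟨f, hfA, hfne⟩ := hsecond
    exact Finset.one_lt_card.2 ⟨f, hfA, s(u, v), heA, hfne⟩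
  have hAF : A ⊆ F := Finset.filter_subset _ _
  -- the crossing edges avoid `u` and `v`
  have hsub : {e' : Sym2 ↥S | e' ∈ T.edgeSet ∧ e' ≠ s(u, v) ∧ EdgeCross s(u, v) e'}
      ⊆ ↑(F \ A) := by
    rintro e' ⟨hmem, hne, a, b, c, d, hab, hcd, hcr⟩
    subst hcd
    have hcd' : c ≠ d := (T.mem_edgeSet.1 hmem).ne
    have hab' : a ≠ b := by
      have : s(a, b) ∈ T.edgeSet := hab ▸ he
      exact (T.mem_edgeSet.1 this).ne
    simp only [Finset.coe_sdiff, Set.mem_diff, Finset.mem_coe, hA, Finset.mem_filter,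
      SimpleGraph.mem_edgeFinset, hF]
    refine ⟨hmem, ?_⟩
    rintro ⟨-, hu | hv⟩
    · refine edgeCross_no_shared hgp hab' hcd' ?_ hcr u (by
        rw [← hab]; exact Sym2.mem_mk_left _ _) hu
      rw [← hab]; exact hne.symm
    · refine edgeCross_no_shared hgp hab' hcd' ?_ hcr v (by
        rw [← hab]; exact Sym2.mem_mk_right _ _) hv
      rw [← hab]; exact hne.symm
  have hFcard : F.card + 1 = S.card := by
    rw [hF, htree.card_edgeFinset, Fintype.card_coe]
  calc Nat.card {e' : Sym2 ↥S | e' ∈ T.edgeSet ∧ e' ≠ s(u, v) ∧ EdgeCross s(u, v) e'}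
      = {e' : Sym2 ↥S | e' ∈ T.edgeSet ∧ e' ≠ s(u, v) ∧ EdgeCross s(u, v) e'}.ncard :=
        Nat.card_coe_set_eq _
    _ ≤ (↑(F \ A) : Set (Sym2 ↥S)).ncard := Set.ncard_le_ncard hsub (Finset.finite_toSet _)
    _ = (F \ A).card := Set.ncard_coe_finset _
    _ = F.card - A.card := Finset.card_sdiff_of_subset hAF
    _ ≤ S.card - 3 := by omega
end
end

section
/- Let n be a power of 2, let i be a natural number with 2^{i} ≤ n, and let a ≤ b be real numbers. Then the number of indices j ∈ {0, 1, …, n−1} for which there exists an integer k with j/n + k·2^{−i} ∈ [a,b] is at most n·(b − a + 1/n)·2^{i}. (Equivalently: if x is chosen uniformly at random from the discrete set {0, 1/n, 2/n, …, (n−1)/n}, the probability that a fixed interval of length ℓ meets the family of points x + 2^{−i}·ℤ is at most (ℓ + 1/n)·2^{i}.) -/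
/-!
Write `n = 2ⁱ m`. Since `j/n + k 2⁻ⁱ = (j + k m)/n`, the index `j` is counted exactly when some
integer `j + k m ≡ j (mod m)` lies in `[n a, n b]`. An index `j < 2ⁱ m` is determined by its residue
mod `m` and its quotient `j / m < 2ⁱ`, so at most `2ⁱ · #(ℤ ∩ [n a, n b]) ≤ 2ⁱ (n (b - a) + 1)`
indices are counted.
-/

open scoped Classical

noncomputable section

theorem Int.card_Icc_ceil_floor_le {K : Type*} [Field K] [LinearOrder K] [IsStrictOrderedRing K]
    [FloorRing K] {x y : K} (hxy : x ≤ y) :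
    ((Finset.Icc ⌈x⌉ ⌊y⌋).card : K) ≤ y - x + 1 := by
  rw [Int.card_Icc]
  rcases le_or_gt (⌊y⌋ + 1 - ⌈x⌉) 0 with hneg | hpos
  · rw [Int.toNat_of_nonpos hneg]
    push_cast
    linarith
  · rw [← Int.cast_natCast, Int.toNat_of_nonneg hpos.le]
    push_cast
    linarith [Int.floor_le y, Int.le_ceil x]

theorem Int.cast_div_mem_Icc_iff {K : Type*} [Field K] [LinearOrder K] [IsStrictOrderedRing K]
    [FloorRing K] {c : K} (hc : 0 < c) (z : ℤ) (a b : K) :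
    (z : K) / c ∈ Set.Icc a b ↔ z ∈ Finset.Icc ⌈c * a⌉ ⌊c * b⌋ := by
  rw [Set.mem_Icc, Finset.mem_Icc, Int.ceil_le, Int.le_floor, le_div_iff₀ hc, div_le_iff₀ hc,
    mul_comm a, mul_comm b]

theorem card_filter_exists_add_mul_mem_le (m p : ℕ) (S : Finset ℤ) :
    ((Finset.range (p * m)).filter (fun j : ℕ => ∃ k : ℤ, (j : ℤ) + k * m ∈ S)).card
      ≤ S.card * p := by
  let residues : Finset ℕ := S.image fun s => (s % (m : ℤ)).toNat
  calc _ ≤ ((residues ×ˢ Finset.range p).image fun rq => rq.2 * m + rq.1).card := by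
        refine Finset.card_le_card fun j hj => ?_
        obtain ⟨hjlt, k, hk⟩ := Finset.mem_filter.mp hj
        have hm : 0 < m := Nat.pos_of_ne_zero (by rintro rfl; simp at hjlt)
        refine Finset.mem_image.mpr ⟨(j % m, j / m), Finset.mem_product.mpr ⟨?_, ?_⟩, ?_⟩
        · refine Finset.mem_image.mpr ⟨_, hk, ?_⟩
          rw [Int.add_mul_emod_self_right]
          omega
        · rw [Finset.mem_range, Nat.div_lt_iff_lt_mul hm]
          exact Finset.mem_range.mp hjlt
        · exact Nat.div_add_mod' j m
    _ ≤ (residues ×ˢ Finset.range p).card := Finset.card_image_le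
    _ ≤ S.card * p := by
        rw [Finset.card_product, Finset.card_range]
        exact Nat.mul_le_mul_right p Finset.card_image_le

/-- Let `n` be a power of `2`, `2ⁱ ≤ n`, and `a ≤ b`. The number of
indices `j ∈ {0, …, n−1}` for which some grid line `j/n + k·2⁻ⁱ` lies in `[a,b]` is
at most `n·(b − a + 1/n)·2ⁱ`. -/
theorem discrete_shift_hits_interval_le
    (n : ℕ) (hn : ∃ t : ℕ, n = 2 ^ t) (i : ℕ) (hi : 2 ^ i ≤ n)
    (a b : ℝ) (hab : a ≤ b) :
    (((Finset.range n).filter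
        (fun j => ∃ k : ℤ,
          (j : ℝ) / (n : ℝ) + (k : ℝ) * (2 : ℝ) ^ (-(i : ℤ)) ∈ Set.Icc a b)).card : ℝ)
      ≤ (n : ℝ) * (b - a + 1 / (n : ℝ)) * 2 ^ i := by
  -- `j : ℝ` makes the filter run over `Finset.range n` cast into `ℝ`.
  simp only [Finset.bind_def, Finset.pure_def, Finset.sup_singleton_apply, Finset.filter_image]
  rw [Finset.card_image_of_injective _ Nat.cast_injective]
  obtain ⟨t, rfl⟩ := hn
  obtain ⟨m, hm⟩ : 2 ^ i ∣ 2 ^ t := Nat.pow_dvd_pow 2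
    ((Nat.pow_le_pow_iff_right (by norm_num)).mp hi)
  have hpos : (0 : ℝ) < (2 ^ t : ℕ) := by positivity
  have hm0 : m ≠ 0 := by rintro rfl; simp at hm
  have hgrid : ∀ (j : ℕ) (k : ℤ), (j : ℝ) / (2 ^ t : ℕ) + (k : ℝ) * (2 : ℝ) ^ (-(i : ℤ))
      = (((j : ℤ) + k * m : ℤ) : ℝ) / (2 ^ t : ℕ) := by
    intro j k
    rw [hm, zpow_neg, zpow_natCast]
    push_cast
    field_simp
  simp_rw [hgrid, Int.cast_div_mem_Icc_iff hpos]
  rw [hm] at hpos ⊢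
  calc _ ≤ (((Finset.Icc ⌈_⌉ ⌊_⌋).card * 2 ^ i : ℕ) : ℝ) := by
        exact_mod_cast card_filter_exists_add_mul_mem_le m (2 ^ i) _
    _ ≤ _ := by
        push_cast
        gcongr
        refine (Int.card_Icc_ceil_floor_le (by gcongr)).trans_eq ?_
        field_simp
end
end

section
/- Every finite set of points in the Euclidean plane in general position, colored with an arbitrary set of colors such that not all points have the same color, admits a plane properly-colored spanning tree: a spanning tree, drawn with straight-line edges no two of which cross, in which the two endpoints of every edge have different colors. -/
open scoped Classical

noncomputable section

/-!
Pick a point `p` of `S` that is extreme in a generic direction: the other points are then seen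
from `p` inside an open half-plane, and are ordered by their direction from `p`. Join `p` to every
point coloured differently from `p`, and join every other point `v` to the differently coloured
point preceding it in this angular order (or to the first one, if none precedes it). This is a
tree of depth two. An edge not at `p` sweeps only directions strictly between those of its
endpoints, and that range contains no differently coloured point; hence edges with four distinct
endpoints sweep disjoint ranges of directions and do not cross, while edges sharing an endpoint
cannot cross by general position.
-/

open Set SimpleGraph

namespace Finset

variable {α : Type*} [LinearOrder α] (O : Finset α) (hO : O.Nonempty)

def predOrMin (x : α) : α :=
  if h : (O.filter (· < x)).Nonempty then (O.filter (· < x)).max' h else O.min' hO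

theorem predOrMin_mem (x : α) : O.predOrMin hO x ∈ O := by
  unfold predOrMin
  split_ifs with h
  · exact (mem_filter.1 (max'_mem _ h)).1
  · exact min'_mem O hO

theorem le_of_not_nonempty_filter_lt {x : α} (h : ¬(O.filter (· < x)).Nonempty) {o : α}
    (ho : o ∈ O) : x ≤ o :=
  not_lt.1 fun hlt => h ⟨o, mem_filter.2 ⟨ho, hlt⟩⟩

theorem notMem_uIoo_predOrMin {o : α} (ho : o ∈ O) (x : α) :
    o ∉ uIoo x (O.predOrMin hO x) := by
  unfold predOrMin
  split_ifs with h
  · rw [uIoo_of_ge (mem_filter.1 (max'_mem _ h)).2.le]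
    exact fun hmem => (le_max' _ o (mem_filter.2 ⟨ho, hmem.2⟩)).not_gt hmem.1
  · rw [uIoo_of_le (le_of_not_nonempty_filter_lt O h (min'_mem O hO))]
    exact fun hmem => (min'_le O o ho).not_gt hmem.2

theorem predOrMin_eq_of_mem_uIoo {x τ : α} (hτ : τ ∈ uIoo x (O.predOrMin hO x)) :
    O.predOrMin hO τ = O.predOrMin hO x := by
  unfold predOrMin at hτ ⊢
  split_ifs at hτ with h
  · rw [uIoo_of_ge (mem_filter.1 (max'_mem _ h)).2.le] at hτ
    have hfilter : O.filter (· < τ) = O.filter (· < x) := by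
      ext o
      simp only [mem_filter, and_congr_right_iff]
      exact fun ho => ⟨fun hoτ => hoτ.trans hτ.2,
        fun hox => (le_max' _ o (mem_filter.2 ⟨ho, hox⟩)).trans_lt hτ.1⟩
    simp only [hfilter, dif_pos h]
  · rw [uIoo_of_le (le_of_not_nonempty_filter_lt O h (min'_mem O hO))] at hτ
    have hτ' : ¬(O.filter (· < τ)).Nonempty := fun ⟨o, ho⟩ =>
      (min'_le O o (mem_filter.1 ho).1).not_gt ((mem_filter.1 ho).2.trans hτ.2)
    rw [dif_neg hτ', dif_neg h]

end Finset

namespace SimpleGraph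

variable {V : Type*} (r : V) (pr : V → V)

def parentGraph : SimpleGraph V :=
  fromEdgeSet {e | ∃ v ≠ r, e = s(v, pr v)}

variable {r pr}

theorem exists_eq_of_mem_edgeSet_parentGraph {e : Sym2 V}
    (he : e ∈ (parentGraph r pr).edgeSet) : ∃ v ≠ r, e = s(v, pr v) := by
  rw [parentGraph, edgeSet_fromEdgeSet] at he
  exact he.1

theorem parentGraph_adj_apply_ne {β : Type*} {f : V → β} (hf : ∀ v ≠ r, f (pr v) ≠ f v)
    {u v : V} (h : (parentGraph r pr).Adj u v) : f u ≠ f v := by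
  obtain ⟨w, hw, hsym⟩ := exists_eq_of_mem_edgeSet_parentGraph ((parentGraph r pr).mem_edgeSet.2 h)
  rcases Sym2.eq_iff.1 hsym with ⟨rfl, rfl⟩ | ⟨rfl, rfl⟩
  exacts [(hf u hw).symm, hf v hw]

variable (height : V → ℕ) (hheight : ∀ v ≠ r, height (pr v) < height v)
include hheight

theorem parentGraph_connected : (parentGraph r pr).Connected := by
  have hreach : ∀ n, ∀ v, height v = n → (parentGraph r pr).Reachable v r := by
    intro n
    induction n using Nat.strong_induction_on with
    | _ n ih =>
      intro v hv
      by_cases hvr : v = r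
      · rw [hvr]
      · have hlt := hheight v hvr
        have hadj : (parentGraph r pr).Adj v (pr v) := by
          rw [parentGraph, fromEdgeSet_adj]
          exact ⟨⟨v, hvr, rfl⟩, fun h => hlt.ne (by rw [← h])⟩
        exact hadj.reachable.trans (ih _ (hv ▸ hlt) _ rfl)
  have : Nonempty V := ⟨r⟩
  exact ⟨fun u v => (hreach _ u rfl).trans (hreach _ v rfl).symm⟩

theorem parentGraph_isTree [Finite V] : (parentGraph r pr).IsTree := by
  rw [isTree_iff_connected_and_card]
  refine ⟨parentGraph_connected height hheight, ?_⟩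
  have hedges : (parentGraph r pr).edgeSet = range fun v : {v // v ≠ r} => s(v.1, pr v.1) := by
    rw [parentGraph, edgeSet_fromEdgeSet]
    ext e
    simp only [mem_sdiff, mem_ofPred_eq, Sym2.mem_diagSet, mem_range, Subtype.exists]
    constructor
    · rintro ⟨⟨v, hv, rfl⟩, -⟩
      exact ⟨v, hv, rfl⟩
    · rintro ⟨v, hv, rfl⟩
      exact ⟨⟨v, hv, rfl⟩,
        fun h => (hheight v hv).ne (congrArg height (Sym2.mk_isDiag_iff.1 h).symm)⟩
  have hinj : Function.Injective fun v : {v // v ≠ r} => s(v.1, pr v.1) := by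
    rintro ⟨v, hv⟩ ⟨w, hw⟩ h
    rcases Sym2.eq_iff.1 h with ⟨hvw, -⟩ | ⟨hvw, hwv⟩
    · exact Subtype.ext hvw
    · have hv' := hheight v hv
      have hw' := hheight w hw
      simp only at hvw hwv
      rw [hwv] at hv'
      rw [← hvw] at hw'
      omega
  rw [hedges, Nat.card_range_of_injective hinj]
  have := Fintype.ofFinite V
  classical
  have : Nonempty V := ⟨r⟩
  rw [Nat.card_eq_fintype_card, Nat.card_eq_fintype_card, Fintype.card_subtype_compl,
    Fintype.card_subtype_eq]
  exact Nat.sub_add_cancel Fintype.card_pos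

end SimpleGraph

theorem edgeCross_mk_iff {S : Finset Pt} {a b c d : ↥S} :
    EdgeCross s(a, b) s(c, d) ↔ SegCross a b c d := by
  refine ⟨fun ⟨a', b', c', d', hab, hcd, x, hx₁, hx₂⟩ => ⟨x, ?_, ?_⟩,
    fun h => ⟨a, b, c, d, rfl, rfl, h⟩⟩
  · rcases Sym2.eq_iff.1 hab with ⟨rfl, rfl⟩ | ⟨rfl, rfl⟩
    exacts [hx₁, by rwa [openSegment_symm]]
  · rcases Sym2.eq_iff.1 hcd with ⟨rfl, rfl⟩ | ⟨rfl, rfl⟩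
    exacts [hx₂, by rwa [openSegment_symm]]

namespace GenPos

variable {S : Finset Pt} (hgp : GenPos S)
include hgp

theorem eq_of_sub_eq_smul_sub {p q r : Pt} (hp : p ∈ S) (hq : q ∈ S) (hr : r ∈ S)
    (hqp : q ≠ p) (hrp : r ≠ p) {c : ℝ} (h : r - p = c • (q - p)) : r = q := by
  by_contra hrq
  refine hgp p hp q hq r hr hqp.symm hrp.symm (Ne.symm hrq) ?_
  have hline : r ∈ line[ℝ, p, q] := by
    rw [← sub_add_cancel r p, h]
    exact AffineMap.lineMap_mem_affineSpan_pair c p q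
  have := collinear_insert_of_mem_affineSpan_pair hline
  rwa [Set.insert_comm, Set.pair_comm] at this

theorem disjoint_openSegment {a b c : Pt} (ha : a ∈ S) (hb : b ∈ S) (hc : c ∈ S)
    (hab : a ≠ b) (hac : a ≠ c) (hbc : b ≠ c) :
    Disjoint (openSegment ℝ a b) (openSegment ℝ a c) := by
  rw [Set.disjoint_left, openSegment_eq_image', openSegment_eq_image']
  rintro _ ⟨θ, hθ, rfl⟩ ⟨θ', hθ', h⟩
  have hsmul : c - a = (θ'⁻¹ * θ) • (b - a) := by
    rw [mul_smul, ← add_left_cancel h, inv_smul_smul₀ hθ'.1.ne']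
  exact hbc (hgp.eq_of_sub_eq_smul_sub ha hb hc hab.symm hac.symm hsmul).symm

theorem planeGraph_of_not_edgeCross {G : SimpleGraph ↥S}
    (h : ∀ e₁ ∈ G.edgeSet, ∀ e₂ ∈ G.edgeSet, (∀ x ∈ e₁, x ∉ e₂) → ¬EdgeCross e₁ e₂) :
    PlaneGraph G := by
  intro e₁ he₁ e₂ he₂ hne hcross
  by_cases hdisj : ∀ x ∈ e₁, x ∉ e₂
  · exact h e₁ he₁ e₂ he₂ hdisj hcross
  push Not at hdisj
  obtain ⟨a, ha₁, ha₂⟩ := hdisj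
  obtain ⟨b, rfl⟩ := Sym2.mem_iff_exists.1 ha₁
  obtain ⟨c, rfl⟩ := Sym2.mem_iff_exists.1 ha₂
  have hab : a ≠ b := G.ne_of_adj he₁
  have hac : a ≠ c := G.ne_of_adj he₂
  have hbc : b ≠ c := by rintro rfl; exact hne rfl
  obtain ⟨x, hx₁, hx₂⟩ := edgeCross_mk_iff.1 hcross
  exact Set.disjoint_left.1 (hgp.disjoint_openSegment a.2 b.2 c.2 (Subtype.coe_injective.ne hab)
    (Subtype.coe_injective.ne hac) (Subtype.coe_injective.ne hbc)) hx₁ hx₂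

end GenPos

theorem mediant_mem_uIoo {a b c d l μ : ℝ} (hb : 0 < b) (hd : 0 < d) (hl : 0 < l) (hμ : 0 < μ)
    (hne : a / b ≠ c / d) : (l * a + μ * c) / (l * b + μ * d) ∈ uIoo (a / b) (c / d) := by
  have hsum : 0 < l * b + μ * d := by positivity
  rcases hne.lt_or_gt with hlt | hlt
  · rw [div_lt_div_iff₀ hb hd] at hlt
    refine mem_uIoo_of_lt ?_ ?_
    · rw [div_lt_div_iff₀ hb hsum]; nlinarith
    · rw [div_lt_div_iff₀ hsum hd]; nlinarith
  · rw [div_lt_div_iff₀ hd hb] at hlt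
    refine mem_uIoo_of_gt ?_ ?_
    · rw [div_lt_div_iff₀ hd hsum]; nlinarith
    · rw [div_lt_div_iff₀ hsum hb]; nlinarith

/-- `σ` orders the points of `T` by the direction in which they are seen from `p`. -/
structure IsAngularCoord {E : Type*} [AddCommGroup E] [Module ℝ E] (p : E) (T : Set E)
    (σ : E → ℝ) : Prop where
  injOn : InjOn σ T
  mem_uIoo_of_mem_openSegment : ∀ u ∈ T, ∀ v ∈ T, u ≠ v →
    ∀ x ∈ openSegment ℝ u v, σ x ∈ uIoo (σ u) (σ v)
  eq_of_mem_openSegment : ∀ w ∈ T, ∀ x ∈ openSegment ℝ p w, σ x = σ w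

theorem isAngularCoord_div {E : Type*} [AddCommGroup E] [Module ℝ E] {p : E} {T : Set E}
    (φ ψ : E →ₗ[ℝ] ℝ) (hpos : ∀ x ∈ T, 0 < φ (x - p))
    (hinj : InjOn (fun x => ψ (x - p) / φ (x - p)) T) :
    IsAngularCoord p T fun x => ψ (x - p) / φ (x - p) where
  injOn := hinj
  mem_uIoo_of_mem_openSegment u hu v hv huv := by
    rintro _ ⟨l, μ, hl, hμ, hlμ, rfl⟩
    have hsub : l • u + μ • v - p = l • (u - p) + μ • (v - p) := by
      linear_combination (norm := module) hlμ • p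
    simp only [hsub, map_add, map_smul, smul_eq_mul]
    exact mediant_mem_uIoo (hpos u hu) (hpos v hv) hl hμ (hinj.ne hu hv huv)
  eq_of_mem_openSegment w hw := by
    rintro _ ⟨l, μ, hl, hμ, hlμ, rfl⟩
    have hsub : l • p + μ • w - p = μ • (w - p) := by
      linear_combination (norm := module) hlμ • p
    simp only [hsub, map_smul, smul_eq_mul]
    exact mul_div_mul_left _ _ hμ.ne'

theorem GenPos.injOn_div {S : Finset Pt} (hgp : GenPos S) {p : Pt} (hp : p ∈ S)
    (φ ψ : Pt →ₗ[ℝ] ℝ) (hφψ : ∀ v, φ v = 0 → ψ v = 0 → v = 0)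
    (hφ : ∀ x ∈ (↑S \ {p} : Set _), φ (x - p) ≠ 0) :
    InjOn (fun x => ψ (x - p) / φ (x - p)) (↑S \ {p}) := by
  intro q hq r hr h
  have hsmul : r - p = (φ (r - p) / φ (q - p)) • (q - p) := by
    have hq0 := hφ q hq
    have hr0 := hφ r hr
    simp only at h
    generalize q - p = Q at *
    generalize r - p = R at *
    rw [← sub_eq_zero]
    refine hφψ _ ?_ ?_ <;> simp only [map_sub, map_smul, smul_eq_mul]
    · field_simp
      ring
    · field_simp at h ⊢
      linarith
  exact (hgp.eq_of_sub_eq_smul_sub hp hq.1 hr.1 hq.2 hr.2 hsmul).symm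

theorem exists_injOn_coord_add_mul (S : Finset Pt) :
    ∃ a : ℝ, InjOn (fun x : Pt => x 0 + a * x 1) S := by
  obtain ⟨a, ha⟩ := Infinite.exists_notMem_finset
    ((S ×ˢ S).image fun qr : Pt × Pt => -((qr.1 0 - qr.2 0) / (qr.1 1 - qr.2 1)))
  refine ⟨a, fun q hq r hr h => ?_⟩
  simp only at h
  by_cases h1 : q 1 = r 1
  · ext i
    fin_cases i
    · simp only [Fin.zero_eta, Fin.isValue]
      rw [h1] at h
      linarith
    · exact h1
  · refine absurd (Finset.mem_image.2 ⟨(q, r), Finset.mem_product.2 ⟨hq, hr⟩, ?_⟩) ha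
    have : q 1 - r 1 ≠ 0 := sub_ne_zero.2 h1
    field_simp
    linarith

theorem GenPos.exists_isAngularCoord {S : Finset Pt} (hgp : GenPos S) (hS : S.Nonempty) :
    ∃ p ∈ S, ∃ σ : Pt → ℝ, IsAngularCoord p (↑S \ {p}) σ := by
  obtain ⟨a, ha⟩ := exists_injOn_coord_add_mul S
  let φ : Pt →ₗ[ℝ] ℝ := EuclideanSpace.projₗ 0 + a • EuclideanSpace.projₗ 1
  obtain ⟨p, hp, hmin⟩ := S.exists_min_image φ hS
  have hpos : ∀ x ∈ (↑S \ {p} : Set _), 0 < φ (x - p) := by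
    rintro x ⟨hx, hxp⟩
    rw [map_sub, sub_pos]
    exact (hmin x hx).lt_of_ne fun h => hxp (ha hx hp h.symm)
  have hφψ : ∀ v, φ v = 0 → EuclideanSpace.projₗ 1 v = 0 → v = 0 := by
    intro v h0 h1
    ext i
    fin_cases i
    · simpa [φ, h1] using h0
    · simpa using h1
  exact ⟨p, hp, _, isAngularCoord_div φ _ hpos
    (hgp.injOn_div hp φ _ hφψ fun x hx => (hpos x hx).ne')⟩

namespace IsAngularCoord

variable {C : Type*} {S : Finset Pt} {p : Pt} {σ : Pt → ℝ}

theorem planeGraph_parentGraph (hσ : IsAngularCoord p (↑S \ {p}) σ) (hgp : GenPos S) (hp : p ∈ S)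
    {pr : ↥S → ↥S} (col : Pt → C) {O : Finset ℝ} (hO : O.Nonempty)
    (hOσ : ∀ w : ↥S, col w ≠ col p → σ w ∈ O)
    (hspoke : ∀ v : ↥S, col v ≠ col p → pr v = ⟨p, hp⟩)
    (hchord : ∀ v : ↥S, col v = col p →
      col (pr v) ≠ col p ∧ σ (pr v) = O.predOrMin hO (σ v)) :
    PlaneGraph (parentGraph ⟨p, hp⟩ pr) := by
  have hmem : ∀ u : ↥S, u ≠ ⟨p, hp⟩ → (u : Pt) ∈ (↑S \ {p} : Set Pt) :=
    fun u hu => ⟨u.2, fun h => hu (Subtype.ext h)⟩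
  have hmem_of_col : ∀ u : ↥S, col u ≠ col p → (u : Pt) ∈ (↑S \ {p} : Set Pt) :=
    fun u hu => hmem u fun h => hu (by rw [h])
  have hspoke_σ : ∀ u : ↥S, col u ≠ col p →
      ∀ y ∈ openSegment ℝ (u : Pt) (pr u), σ y = σ u := by
    intro u hu y hy
    rw [hspoke u hu, openSegment_symm] at hy
    exact hσ.eq_of_mem_openSegment u (hmem_of_col u hu) y hy
  have hchord_σ : ∀ u : ↥S, u ≠ ⟨p, hp⟩ → col u = col p →
      ∀ y ∈ openSegment ℝ (u : Pt) (pr u), σ y ∈ uIoo (σ u) (O.predOrMin hO (σ u)) := by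
    intro u hu hcol y hy
    obtain ⟨hcol', hσpr⟩ := hchord u hcol
    rw [← hσpr]
    refine hσ.mem_uIoo_of_mem_openSegment u (hmem u hu) _ (hmem_of_col _ hcol') ?_ y hy
    exact fun h => hcol' (by rw [← h, hcol])
  have hchord_spoke : ∀ u u' : ↥S, u ≠ ⟨p, hp⟩ → col u = col p → col u' ≠ col p →
      ∀ y ∈ openSegment ℝ (u : Pt) (pr u), y ∉ openSegment ℝ (u' : Pt) (pr u') :=
    fun u u' hu hcol hcol' y hy hy' => Finset.notMem_uIoo_predOrMin O hO (hOσ u' hcol') _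
      (hspoke_σ u' hcol' y hy' ▸ hchord_σ u hu hcol y hy)
  apply hgp.planeGraph_of_not_edgeCross
  intro e₁ he₁ e₂ he₂ hdisj
  obtain ⟨v, hv, rfl⟩ := exists_eq_of_mem_edgeSet_parentGraph he₁
  obtain ⟨w, hw, rfl⟩ := exists_eq_of_mem_edgeSet_parentGraph he₂
  rw [edgeCross_mk_iff]
  rintro ⟨x, hxv, hxw⟩
  have hpr : pr v ≠ pr w := fun h =>
    hdisj (pr v) (Sym2.mem_mk_right _ _) (h ▸ Sym2.mem_mk_right _ _)
  by_cases hv' : col v = col p <;> by_cases hw' : col w = col p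
  · refine hpr (Subtype.ext (hσ.injOn (hmem_of_col _ (hchord v hv').1)
      (hmem_of_col _ (hchord w hw').1) ?_))
    rw [(hchord v hv').2, (hchord w hw').2,
      ← Finset.predOrMin_eq_of_mem_uIoo O hO (hchord_σ v hv hv' x hxv),
      ← Finset.predOrMin_eq_of_mem_uIoo O hO (hchord_σ w hw hw' x hxw)]
  · exact hchord_spoke v w hv hv' hw' x hxv hxw
  · exact hchord_spoke w v hw hw' hv' x hxw hxv
  · exact hpr ((hspoke v hv').trans (hspoke w hw').symm)

theorem exists_plane_properly_colored_tree (hσ : IsAngularCoord p (↑S \ {p}) σ) (hgp : GenPos S)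
    (hp : p ∈ S) (col : Pt → C) (hq : ∃ q ∈ S, col q ≠ col p) :
    ∃ G : SimpleGraph ↥S, G.IsTree ∧ (∀ u v : ↥S, G.Adj u v → col ↑u ≠ col ↑v) ∧
      PlaneGraph G := by
  set O := (S.filter fun w => col w ≠ col p).image σ
  have hOσ : ∀ w : ↥S, col w ≠ col p → σ w ∈ O :=
    fun w hw => Finset.mem_image_of_mem σ (Finset.mem_filter.2 ⟨w.2, hw⟩)
  obtain ⟨q, hqS, hqp⟩ := hq
  have hO : O.Nonempty := ⟨_, hOσ ⟨q, hqS⟩ hqp⟩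
  have hend : ∀ τ : ℝ, ∃ m : ↥S, col m ≠ col p ∧ σ m = O.predOrMin hO τ := by
    intro τ
    obtain ⟨m, hm, hmτ⟩ := Finset.mem_image.1 (O.predOrMin_mem hO τ)
    exact ⟨⟨m, (Finset.mem_filter.1 hm).1⟩, (Finset.mem_filter.1 hm).2, hmτ⟩
  choose chordEnd hchordEnd_col hchordEnd_σ using hend
  let P : ↥S := ⟨p, hp⟩
  let pr : ↥S → ↥S := fun v => if col v = col p then chordEnd (σ v) else P
  have hpr_col : ∀ v, col (pr v) ≠ col v := by
    intro v
    by_cases hv : col v = col p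
    · simpa only [pr, if_pos hv, hv] using hchordEnd_col (σ v)
    · simpa only [pr, if_neg hv] using Ne.symm hv
  let height : ↥S → ℕ := fun v => if v = P then 0 else if col v = col p then 2 else 1
  have hheight : ∀ v ≠ P, height (pr v) < height v := by
    intro v hv
    have hcol := hpr_col v
    simp only [height, pr] at hcol ⊢
    split_ifs at hcol ⊢ <;> simp_all [P]
  refine ⟨parentGraph P pr, parentGraph_isTree height hheight,
    fun u v => parentGraph_adj_apply_ne (f := fun x : ↥S => col x) fun v _ => hpr_col v,
    hσ.planeGraph_parentGraph hgp hp col hO hOσ (fun v hv => if_neg hv)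
      fun v hv => ⟨?_, ?_⟩⟩
  · simpa only [pr, if_pos hv] using hchordEnd_col (σ v)
  · simpa only [pr, if_pos hv] using hchordEnd_σ (σ v)

end IsAngularCoord

/-- Every finite point set in general position, colored with an
arbitrary set of colors such that not all points have the same color, admits a plane
properly-colored spanning tree. -/
theorem exists_plane_properly_colored_spanning_tree
    {C : Type*} (S : Finset Pt) (col : Pt → C) (hgp : GenPos S)
    (hne : ∃ p ∈ S, ∃ q ∈ S, col p ≠ col q) :
    ∃ G : SimpleGraph ↥S, G.IsTree ∧
      (∀ u v : ↥S, G.Adj u v → col ↑u ≠ col ↑v) ∧ PlaneGraph G := by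
  obtain ⟨p₀, hp₀, q₀, hq₀, hpq⟩ := hne
  obtain ⟨p, hp, σ, hσ⟩ := hgp.exists_isAngularCoord ⟨p₀, hp₀⟩
  refine hσ.exists_plane_properly_colored_tree hgp hp col ?_
  by_cases h : col p₀ = col p
  · exact ⟨q₀, hq₀, h ▸ hpq.symm⟩
  · exact ⟨p₀, hp₀, h⟩
end
end
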